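/- arXiv:1803.01480 — 4 statements merged into one kernel-verified Lean document; each statement's English description precedes it below -/
import Mathlib

section
/- For sequences A, B of length n over the integers and even shift s, the interleaved sequence A x B = (a_0, b_0, a_1, b_1, ..., a_{n-1}, b_{n-1}) of length 2n satisfies PAF_{A x B}(s) = PAF_A(s/2) + PAF_B(s/2). -/
open Finset

/-- Periodic cross-correlation of two integer sequences of length `n`. -/
def PCF (n : ℕ) (X Y : ℕ → ℤ) (s : ℕ) : ℤ :=
  ∑ k ∈ Finset.range n, X k * Y ((k + s) % n)

/-- Periodic autocorrelation of an integer sequence of length `n`. -/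
def PAF (n : ℕ) (X : ℕ → ℤ) (s : ℕ) : ℤ :=
  PCF n X X s

/-- Interleaving (perfect shuffle) of two sequences. -/
def interleave (X Y : ℕ → ℤ) : ℕ → ℤ :=
  fun k => if k % 2 = 0 then X (k / 2) else Y (k / 2)

/-- Entrywise negation of a sequence. -/
def negSeq (X : ℕ → ℤ) : ℕ → ℤ :=
  fun k => -X k

/-- Cyclic shift of a length-`n` sequence by offset `m`. -/
def cshift (n m : ℕ) (X : ℕ → ℤ) : ℕ → ℤ :=
  fun k => X ((k + (n - m % n)) % n)

/-- A ±1 sequence of length `n`. -/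
def IsPM1 (n : ℕ) (X : ℕ → ℤ) : Prop :=
  ∀ k < n, X k = 1 ∨ X k = -1

/-- A symmetric sequence of length `n`: `x_k = x_{n-k}` for `k = 1, …, n-1`. -/
def SeqSymm (n : ℕ) (X : ℕ → ℤ) : Prop :=
  ∀ k, 1 ≤ k → k < n → X k = X (n - k)

lemma sum_range_two_mul' {M : Type*} [AddCommMonoid M] (n : ℕ) (f : ℕ → M) :
    ∑ k ∈ Finset.range (2 * n), f k = ∑ i ∈ Finset.range n, (f (2 * i) + f (2 * i + 1)) := by
  induction n with
  | zero => simp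
  | succ n ih =>
    rw [Finset.sum_range_succ, ← ih, Nat.mul_succ, Finset.sum_range_succ, Finset.sum_range_succ]
    ring_nf
    rw [add_assoc]

lemma interleave_even (A B : ℕ → ℤ) (x : ℕ) : interleave A B (2 * x) = A x := by
  simp [interleave, Nat.mul_mod_right]

lemma interleave_odd (A B : ℕ → ℤ) (x : ℕ) : interleave A B (2 * x + 1) = B x := by
  simp [interleave, Nat.mul_add_mod, Nat.mul_add_div]

theorem paf_interleave_even (n : ℕ) (A B : ℕ → ℤ) (s : ℕ) (hs : s % 2 = 0) :
    PAF (2 * n) (interleave A B) s = PAF n A (s / 2) + PAF n B (s / 2) := by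
  rcases Nat.eq_zero_or_pos n with hn | hn
  · simp [PAF, PCF, hn]
  obtain ⟨t, ht⟩ : ∃ t, s = 2 * t := ⟨s / 2, by omega⟩
  subst ht
  have hst : 2 * t / 2 = t := by omega
  rw [hst]
  unfold PAF PCF
  rw [sum_range_two_mul', ← Finset.sum_add_distrib]
  refine Finset.sum_congr rfl fun i _ => ?_
  have hr : (i + t) % n < n := Nat.mod_lt _ hn
  have heq : (2 * i + 2 * t) % (2 * n) = 2 * ((i + t) % n) := by
    rw [← Nat.mul_add, Nat.mul_mod_mul_left]
  have hodd : (2 * i + 1 + 2 * t) % (2 * n) = 2 * ((i + t) % n) + 1 := by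
    have hq : i + t = n * ((i + t) / n) + (i + t) % n := (Nat.div_add_mod _ _).symm
    calc (2 * i + 1 + 2 * t) % (2 * n)
        = (2 * ((i + t) % n) + 1 + (i + t) / n * (2 * n)) % (2 * n) := by
          congr 1
          nlinarith [hq]
      _ = (2 * ((i + t) % n) + 1) % (2 * n) := Nat.add_mul_mod_self_right _ _ _
      _ = 2 * ((i + t) % n) + 1 := Nat.mod_eq_of_lt (by omega)
  rw [heq, hodd, interleave_even, interleave_even, interleave_odd, interleave_odd]
end

section
/- For sequences X, Y of length n over the integers and any odd s, PAF_{(-X) x Y}(s) = -PAF_{X x Y}(s), where x denotes interleaving. -/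
open Finset

theorem paf_interleave_neg_odd (n : ℕ) (X Y : ℕ → ℤ) (s : ℕ) (hs : s % 2 = 1) :
    PAF (2 * n) (interleave (negSeq X) Y) s = -PAF (2 * n) (interleave X Y) s := by
  rcases Nat.eq_zero_or_pos n with rfl | hn
  · simp [PAF, PCF]
  unfold PAF PCF
  rw [← Finset.sum_neg_distrib]
  refine Finset.sum_congr rfl fun k hk => ?_
  set m := (k + s) % (2 * n) with hm
  have h2 : (2 : ℕ) ∣ 2 * n := ⟨n, rfl⟩
  have hmp : m % 2 = (k + s) % 2 := Nat.mod_mod_of_dvd _ h2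
  have hks : (k + s) % 2 = (k % 2 + 1) % 2 := by
    rw [Nat.add_mod, hs]
  rcases Nat.mod_two_eq_zero_or_one k with hk2 | hk2
  · have hm2 : m % 2 = 1 := by rw [hmp, hks, hk2]
    simp [interleave, negSeq, hk2, hm2]
  · have hm2 : m % 2 = 0 := by rw [hmp, hks, hk2]
    simp [interleave, negSeq, hk2, hm2]
end

section
/- Main doubling theorem: Let A, B, C, D be Williamson sequences of odd order n, and let B', D' denote the cyclic shifts of B, D by offset (n-1)/2. Then the four sequences A x B', (-A) x B', C x D', (-C) x D' are Williamson sequences of order 2n. -/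
open Finset

/-- Williamson sequences of order `n`. -/
def IsWilliamson (n : ℕ) (A B C D : ℕ → ℤ) : Prop :=
  IsPM1 n A ∧ IsPM1 n B ∧ IsPM1 n C ∧ IsPM1 n D ∧
  SeqSymm n A ∧ SeqSymm n B ∧ SeqSymm n C ∧ SeqSymm n D ∧
  ∀ s, 1 ≤ s → s ≤ n / 2 → PAF n A s + PAF n B s + PAF n C s + PAF n D s = 0

/- ### Auxiliary lemmas -/

lemma aux_even_mod (n a : ℕ) : (2 * a) % (2 * n) = 2 * (a % n) :=
  Nat.mul_mod_mul_left 2 a n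

lemma aux_odd_mod (n a : ℕ) (hn : 0 < n) : (2 * a + 1) % (2 * n) = 2 * (a % n) + 1 := by
  have hd := Nat.div_add_mod a n
  have hm := Nat.mod_lt a hn
  have h1 : 2 * a + 1 = 2 * n * (a / n) + (2 * (a % n) + 1) := by
    have : 2 * n * (a / n) = 2 * (n * (a / n)) := by ring
    omega
  rw [h1, Nat.mul_add_mod, Nat.mod_eq_of_lt (by omega)]

lemma aux_add_zero_mod (n k t : ℕ) (hn : 0 < n) (hk : k < n) (ht : t % n = 0) :
    (k + t) % n = k := by
  obtain ⟨q, rfl⟩ := Nat.dvd_of_mod_eq_zero ht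
  rw [mul_comm, Nat.add_mul_mod_self_right, Nat.mod_eq_of_lt hk]

lemma aux_comp_zero (n c : ℕ) (hn : 0 < n) : (c + (n - c % n)) % n = 0 := by
  have hd := Nat.div_add_mod c n
  have hm := Nat.mod_lt c hn
  have h2 : c + (n - c % n) = n * (c / n) + n := by omega
  rw [h2, Nat.mul_add_mod, Nat.mod_self]

lemma aux_sum_shift (n c : ℕ) (hn : 0 < n) (f : ℕ → ℤ) :
    ∑ k ∈ Finset.range n, f ((k + c) % n) = ∑ k ∈ Finset.range n, f k := by
  apply Finset.sum_nbij' (fun k => (k + c) % n) (fun k => (k + (n - c % n)) % n)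
  · intro a _; exact Finset.mem_range.mpr (Nat.mod_lt _ hn)
  · intro a _; exact Finset.mem_range.mpr (Nat.mod_lt _ hn)
  · intro a ha
    rw [Nat.mod_add_mod, add_assoc]
    exact aux_add_zero_mod n a _ hn (Finset.mem_range.mp ha) (aux_comp_zero n c hn)
  · intro a ha
    rw [Nat.mod_add_mod, add_assoc]
    refine aux_add_zero_mod n a _ hn (Finset.mem_range.mp ha) ?_
    rw [add_comm]; exact aux_comp_zero n c hn
  · intro a _; rfl

lemma interleave_two_mul (X Y : ℕ → ℤ) (j : ℕ) : interleave X Y (2 * j) = X j := by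
  simp [interleave, Nat.mul_mod_right, Nat.mul_div_cancel_left j (by norm_num : 0 < 2)]

lemma interleave_two_mul_add_one (X Y : ℕ → ℤ) (j : ℕ) :
    interleave X Y (2 * j + 1) = Y j := by
  have h1 : (2 * j + 1) % 2 = 1 := by omega
  have h2 : (2 * j + 1) / 2 = j := by omega
  simp [interleave, h1, h2]

lemma sum_range_double {M : Type*} [AddCommMonoid M] (n : ℕ) (f : ℕ → M) :
    ∑ k ∈ Finset.range (2 * n), f k
      = ∑ j ∈ Finset.range n, f (2 * j) + ∑ j ∈ Finset.range n, f (2 * j + 1) := by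
  induction n with
  | zero => simp
  | succ n ih =>
    have h : 2 * (n + 1) = (2 * n + 1) + 1 := by ring
    rw [h, Finset.sum_range_succ, Finset.sum_range_succ, Finset.sum_range_succ,
      Finset.sum_range_succ, ih]
    abel

lemma PAF_interleave_even (n : ℕ) (hn : 0 < n) (X Y : ℕ → ℤ) (t : ℕ) :
    PAF (2 * n) (interleave X Y) (2 * t) = PAF n X t + PAF n Y t := by
  unfold PAF PCF
  rw [sum_range_double]
  congr 1
  · refine Finset.sum_congr rfl fun j _ => ?_
    have h : (2 * j + 2 * t) % (2 * n) = 2 * ((j + t) % n) := by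
      rw [show 2 * j + 2 * t = 2 * (j + t) by ring, aux_even_mod]
    rw [h, interleave_two_mul, interleave_two_mul]
  · refine Finset.sum_congr rfl fun j _ => ?_
    have h : (2 * j + 1 + 2 * t) % (2 * n) = 2 * ((j + t) % n) + 1 := by
      rw [show 2 * j + 1 + 2 * t = 2 * (j + t) + 1 by ring, aux_odd_mod n _ hn]
    rw [h, interleave_two_mul_add_one, interleave_two_mul_add_one]

lemma PAF_interleave_odd (n : ℕ) (hn : 0 < n) (X Y : ℕ → ℤ) (t : ℕ) :
    PAF (2 * n) (interleave X Y) (2 * t + 1) = PCF n X Y t + PCF n Y X (t + 1) := by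
  unfold PAF PCF
  rw [sum_range_double]
  congr 1
  · refine Finset.sum_congr rfl fun j _ => ?_
    have h : (2 * j + (2 * t + 1)) % (2 * n) = 2 * ((j + t) % n) + 1 := by
      rw [show 2 * j + (2 * t + 1) = 2 * (j + t) + 1 by ring, aux_odd_mod n _ hn]
    rw [h, interleave_two_mul, interleave_two_mul_add_one]
  · refine Finset.sum_congr rfl fun j _ => ?_
    have h : (2 * j + 1 + (2 * t + 1)) % (2 * n) = 2 * ((j + (t + 1)) % n) := by
      rw [show 2 * j + 1 + (2 * t + 1) = 2 * (j + (t + 1)) by ring, aux_even_mod]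
    rw [h, interleave_two_mul_add_one, interleave_two_mul]

lemma PCF_neg_left (n : ℕ) (X Y : ℕ → ℤ) (s : ℕ) :
    PCF n (negSeq X) Y s = -PCF n X Y s := by
  simp [PCF, negSeq, Finset.sum_neg_distrib]

lemma PCF_neg_right (n : ℕ) (X Y : ℕ → ℤ) (s : ℕ) :
    PCF n X (negSeq Y) s = -PCF n X Y s := by
  simp [PCF, negSeq, Finset.sum_neg_distrib]

lemma PAF_neg (n : ℕ) (X : ℕ → ℤ) (s : ℕ) : PAF n (negSeq X) s = PAF n X s := by
  simp [PAF, PCF, negSeq]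

lemma PAF_cshift (n m : ℕ) (hn : 0 < n) (X : ℕ → ℤ) (s : ℕ) :
    PAF n (cshift n m X) s = PAF n X s := by
  unfold PAF PCF cshift
  set c := n - m % n with hc
  rw [← aux_sum_shift n c hn (fun j => X j * X ((j + s) % n))]
  refine Finset.sum_congr rfl fun k _ => ?_
  have h : ((k + s) % n + c) % n = ((k + c) % n + s) % n := by
    rw [Nat.mod_add_mod, Nat.mod_add_mod, Nat.add_right_comm]
  rw [h]

/-- The shifted symmetric sequence satisfies the "anti-diagonal" symmetry. -/
lemma cshift_half_symm (n : ℕ) (m : ℕ) (hm : n = 2 * m + 1) (B : ℕ → ℤ)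
    (hB : SeqSymm n B) : ∀ j < n, cshift n ((n - 1) / 2) B j = cshift n ((n - 1) / 2) B (n - 1 - j) := by
  intro j hj
  unfold cshift
  have hd : (n - 1) / 2 = m := by omega
  rw [hd]
  have hmm : m % n = m := Nat.mod_eq_of_lt (by omega)
  rw [hmm]
  have hc : n - m = m + 1 := by omega
  rw [hc]
  rcases Nat.lt_trichotomy j m with hlt | heq | hgt
  · have e1 : (j + (m + 1)) % n = j + m + 1 := Nat.mod_eq_of_lt (by omega)
    have e2 : (n - 1 - j + (m + 1)) % n = m - j := by
      rw [show n - 1 - j + (m + 1) = n + (m - j) by omega, Nat.add_mod_left]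
      exact Nat.mod_eq_of_lt (by omega)
    rw [e1, e2]
    have := hB (j + m + 1) (by omega) (by omega)
    rw [this]
    congr 1
    omega
  · have e1 : (j + (m + 1)) % n = 0 := by
      rw [show j + (m + 1) = n by omega, Nat.mod_self]
    have e2 : (n - 1 - j + (m + 1)) % n = 0 := by
      rw [show n - 1 - j + (m + 1) = n by omega, Nat.mod_self]
    rw [e1, e2]
  · have e1 : (j + (m + 1)) % n = j - m := by
      rw [show j + (m + 1) = n + (j - m) by omega, Nat.add_mod_left]
      exact Nat.mod_eq_of_lt (by omega)
    have e2 : (n - 1 - j + (m + 1)) % n = n - (j - m) := by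
      rw [show n - 1 - j + (m + 1) = n - (j - m) by omega]
      exact Nat.mod_eq_of_lt (by omega)
    rw [e1, e2]
    exact hB (j - m) (by omega) (by omega)

lemma interleave_symm (n : ℕ) (hn : 0 < n) (X Y : ℕ → ℤ) (hX : SeqSymm n X)
    (hY : ∀ j < n, Y j = Y (n - 1 - j)) : SeqSymm (2 * n) (interleave X Y) := by
  intro k hk1 hk2
  rcases Nat.even_or_odd k with ⟨j, hj⟩ | ⟨j, hj⟩
  · have h1 : interleave X Y k = X j := by
      rw [show k = 2 * j by omega]; exact interleave_two_mul X Y j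
    have h2 : interleave X Y (2 * n - k) = X (n - j) := by
      rw [show 2 * n - k = 2 * (n - j) by omega]; exact interleave_two_mul X Y (n - j)
    rw [h1, h2]
    exact hX j (by omega) (by omega)
  · have h1 : interleave X Y k = Y j := by
      rw [show k = 2 * j + 1 by omega]; exact interleave_two_mul_add_one X Y j
    have h2 : interleave X Y (2 * n - k) = Y (n - 1 - j) := by
      rw [show 2 * n - k = 2 * (n - 1 - j) + 1 by omega]
      exact interleave_two_mul_add_one X Y (n - 1 - j)
    rw [h1, h2]
    exact hY j (by omega)

lemma interleave_pm1 (n : ℕ) (X Y : ℕ → ℤ) (hX : IsPM1 n X) (hY : IsPM1 n Y) :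
    IsPM1 (2 * n) (interleave X Y) := by
  intro k hk
  unfold interleave
  by_cases h : k % 2 = 0
  · simp only [h, if_true]; exact hX _ (by omega)
  · simp only [h, if_false]; exact hY _ (by omega)

lemma cshift_pm1 (n m : ℕ) (hn : 0 < n) (X : ℕ → ℤ) (hX : IsPM1 n X) :
    IsPM1 n (cshift n m X) := by
  intro k _
  exact hX _ (Nat.mod_lt _ hn)

lemma negSeq_pm1 (n : ℕ) (X : ℕ → ℤ) (hX : IsPM1 n X) : IsPM1 n (negSeq X) := by
  intro k hk
  rcases hX k hk with h | h <;> simp [negSeq, h]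

lemma negSeq_symm (n : ℕ) (X : ℕ → ℤ) (hX : SeqSymm n X) : SeqSymm n (negSeq X) := by
  intro k h1 h2
  simp [negSeq, hX k h1 h2]

theorem williamson_doubling (n : ℕ) (hn : Odd n) (A B C D : ℕ → ℤ)
    (h : IsWilliamson n A B C D) :
    IsWilliamson (2 * n) (interleave A (cshift n ((n - 1) / 2) B))
      (interleave (negSeq A) (cshift n ((n - 1) / 2) B))
      (interleave C (cshift n ((n - 1) / 2) D))
      (interleave (negSeq C) (cshift n ((n - 1) / 2) D)) := by
  obtain ⟨m, hm⟩ := hn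
  have hm' : n = 2 * m + 1 := by omega
  have hn0 : 0 < n := by omega
  obtain ⟨hA1, hB1, hC1, hD1, hA2, hB2, hC2, hD2, hPAF⟩ := h
  set B' := cshift n ((n - 1) / 2) B with hB'
  set D' := cshift n ((n - 1) / 2) D with hD'
  refine ⟨interleave_pm1 n _ _ hA1 (cshift_pm1 n _ hn0 B hB1),
    interleave_pm1 n _ _ (negSeq_pm1 n A hA1) (cshift_pm1 n _ hn0 B hB1),
    interleave_pm1 n _ _ hC1 (cshift_pm1 n _ hn0 D hD1),
    interleave_pm1 n _ _ (negSeq_pm1 n C hC1) (cshift_pm1 n _ hn0 D hD1),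
    interleave_symm n hn0 _ _ hA2 (cshift_half_symm n m hm' B hB2),
    interleave_symm n hn0 _ _ (negSeq_symm n A hA2) (cshift_half_symm n m hm' B hB2),
    interleave_symm n hn0 _ _ hC2 (cshift_half_symm n m hm' D hD2),
    interleave_symm n hn0 _ _ (negSeq_symm n C hC2) (cshift_half_symm n m hm' D hD2),
    ?_⟩
  intro s hs1 hs2
  have hsn : s ≤ n := by omega
  rcases Nat.even_or_odd s with ⟨t, ht⟩ | ⟨t, ht⟩
  · -- even shift
    rw [show s = 2 * t by omega]
    rw [PAF_interleave_even n hn0, PAF_interleave_even n hn0,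
      PAF_interleave_even n hn0, PAF_interleave_even n hn0]
    rw [PAF_neg, PAF_neg, hB', hD', PAF_cshift n _ hn0, PAF_cshift n _ hn0]
    have := hPAF t (by omega) (by omega)
    linarith
  · -- odd shift
    rw [show s = 2 * t + 1 by omega]
    rw [PAF_interleave_odd n hn0, PAF_interleave_odd n hn0,
      PAF_interleave_odd n hn0, PAF_interleave_odd n hn0]
    rw [PCF_neg_left, PCF_neg_right, PCF_neg_left, PCF_neg_right]
    ring
end

section
/- If there exist Williamson sequences of order n, then there exists a Hadamard matrix of order 4n. -/
open Finset

/-! ### Auxiliary machinery for the Williamson construction -/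

/-- Sign table of the Williamson array. -/
def wE : Fin 4 → Fin 4 → ℤ :=
  ![![1,1,1,1], ![-1,1,-1,1], ![-1,1,1,-1], ![-1,-1,1,1]]

/-- Sequence-index table of the Williamson array. -/
def wT : Fin 4 → Fin 4 → Fin 4 :=
  ![![0,1,2,3], ![1,0,3,2], ![2,3,0,1], ![3,2,1,0]]

/-- Selector for the four Williamson sequences. -/
def wSel (A B C D : ℕ → ℤ) : Fin 4 → ℕ → ℤ
  | 0 => A
  | 1 => B
  | 2 => C
  | 3 => D

lemma wE_pm (p q : Fin 4) : wE p q = 1 ∨ wE p q = -1 := by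
  revert p q; decide

lemma wE_sq (p q : Fin 4) : wE p q * wE p q = 1 := by
  rcases wE_pm p q with h | h <;> rw [h] <;> ring

lemma quaternion_orth (f : Fin 4 → Fin 4 → ℤ) (hf : ∀ a b, f a b = f b a)
    (p p' : Fin 4) (hpp : p ≠ p') :
    ∑ q : Fin 4, wE p q * wE p' q * f (wT p q) (wT p' q) = 0 := by
  fin_cases p <;> fin_cases p' <;>
    simp [wE, wT, Fin.sum_univ_four] at hpp ⊢ <;>
    linarith [hf 0 1, hf 0 2, hf 0 3, hf 1 2, hf 1 3, hf 2 3]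

/-- Block index of a row/column of the `4n × 4n` Williamson array. -/
def blkIdx (n : ℕ) (i : Fin (4 * n)) : Fin 4 :=
  ⟨i.val / n % 4, Nat.mod_lt _ (by norm_num)⟩

/-- The Williamson array built from a quadruple of sequences. -/
def wMat (n : ℕ) (W : Fin 4 → ℕ → ℤ) : Matrix (Fin (4 * n)) (Fin (4 * n)) ℤ :=
  fun i j => wE (blkIdx n i) (blkIdx n j) *
    W (wT (blkIdx n i) (blkIdx n j)) (((j.val : ZMod n) - (i.val : ZMod n)).val)

section
variable {n : ℕ} [NeZero n]

/-- Inner correlation sum over `ZMod n`. -/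
def innerZ (X Y : ZMod n → ℤ) (s : ZMod n) : ℤ := ∑ z : ZMod n, X z * Y (z + s)

lemma sum_zmod_eq_range (f : ZMod n → ℤ) :
    ∑ z : ZMod n, f z = ∑ k ∈ Finset.range n, f (k : ZMod n) := by
  refine Finset.sum_bij' (fun (z : ZMod n) (_ : z ∈ Finset.univ) => z.val)
    (fun (k : ℕ) (_ : k ∈ Finset.range n) => (k : ZMod n)) ?_ ?_ ?_ ?_ ?_
  · intro z _; exact Finset.mem_range.2 z.val_lt
  · intro k _; exact Finset.mem_univ _
  · intro z _; exact ZMod.natCast_rightInverse z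
  · intro k hk; exact ZMod.val_cast_of_lt (Finset.mem_range.1 hk)
  · intro z _; rw [ZMod.natCast_rightInverse z]

lemma innerZ_eq_PCF (X Y : ℕ → ℤ) (s : ZMod n) :
    innerZ (fun z => X z.val) (fun z => Y z.val) s = PCF n X Y s.val := by
  rw [innerZ, sum_zmod_eq_range, PCF]
  refine Finset.sum_congr rfl fun k hk => ?_
  have hk' := Finset.mem_range.1 hk
  rw [ZMod.val_cast_of_lt hk']
  congr 1
  have : ((k : ZMod n) + s) = ((k + s.val : ℕ) : ZMod n) := by
    push_cast [ZMod.natCast_rightInverse s]; ring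
  rw [this, ZMod.val_natCast]

lemma innerZ_shift (X Y : ZMod n → ℤ) (a b : ZMod n) :
    ∑ z : ZMod n, X (z - a) * Y (z - b) = innerZ X Y (a - b) := by
  rw [innerZ]
  refine Fintype.sum_equiv (Equiv.subRight a) _ _ fun z => ?_
  simp only [Equiv.subRight_apply]
  rw [sub_add_sub_cancel]

lemma innerZ_comm (X Y : ZMod n → ℤ) (hX : ∀ z, X (-z) = X z)
    (hY : ∀ z, Y (-z) = Y z) (s : ZMod n) : innerZ X Y s = innerZ Y X s := by
  rw [innerZ, innerZ]
  have hinv : Function.Involutive (fun z : ZMod n => -(z + s)) := by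
    intro z; simp only []; ring
  refine Fintype.sum_equiv hinv.toPerm _ _ fun z => ?_
  simp only [Function.Involutive.coe_toPerm]
  have h1 : -(z + s) + s = -z := by ring
  rw [h1, hX, hY, mul_comm]

lemma innerZ_self_zero (X : ZMod n → ℤ) (hX : ∀ z, X z = 1 ∨ X z = -1) :
    innerZ X X 0 = (n : ℤ) := by
  rw [innerZ]
  have : ∀ z : ZMod n, X z * X (z + 0) = 1 := by
    intro z; rw [add_zero]; rcases hX z with h | h <;> rw [h] <;> ring
  rw [Finset.sum_congr rfl fun z _ => this z]
  simp [ZMod.card]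

end

theorem williamson_to_hadamard (n : ℕ)
    (h : ∃ A B C D : ℕ → ℤ,
      IsPM1 n A ∧ IsPM1 n B ∧ IsPM1 n C ∧ IsPM1 n D ∧
      SeqSymm n A ∧ SeqSymm n B ∧ SeqSymm n C ∧ SeqSymm n D ∧
      ∀ s, 1 ≤ s → s < n → PAF n A s + PAF n B s + PAF n C s + PAF n D s = 0) :
    ∃ H : Matrix (Fin (4 * n)) (Fin (4 * n)) ℤ,
      (∀ i j, H i j = 1 ∨ H i j = -1) ∧
      H * H.transpose = (4 * n : ℤ) • (1 : Matrix (Fin (4 * n)) (Fin (4 * n)) ℤ) := by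
  obtain ⟨A, B, C, D, hA1, hB1, hC1, hD1, hAs, hBs, hCs, hDs, hW⟩ := h
  rcases Nat.eq_zero_or_pos n with hn | hn
  · subst hn
    refine ⟨1, fun i j => absurd i.isLt (by simp), ?_⟩
    ext i j
    exact absurd i.isLt (by simp)
  haveI : NeZero n := ⟨hn.ne'⟩
  set W : Fin 4 → ℕ → ℤ := wSel A B C D with hWdef
  have hPM : ∀ c, IsPM1 n (W c) := by
    intro c
    fin_cases c
    · exact hA1
    · exact hB1
    · exact hC1
    · exact hD1
  have hSym : ∀ c, SeqSymm n (W c) := by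
    intro c
    fin_cases c
    · exact hAs
    · exact hBs
    · exact hCs
    · exact hDs
  have hsymZ : ∀ (c : Fin 4) (z : ZMod n), W c (-z).val = W c z.val := by
    intro c z
    by_cases hz : z = 0
    · simp [hz]
    · rw [ZMod.neg_val, if_neg hz]
      have h1 : 1 ≤ z.val := Nat.one_le_iff_ne_zero.2 fun h0 => hz ((ZMod.val_eq_zero z).1 h0)
      exact (hSym c z.val h1 z.val_lt).symm
  refine ⟨wMat n W, ?_, ?_⟩
  · intro i j
    rcases wE_pm (blkIdx n i) (blkIdx n j) with he | he <;>
      rcases hPM (wT (blkIdx n i) (blkIdx n j)) (((j.val : ZMod n) - (i.val : ZMod n)).val)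
        (ZMod.val_lt _) with hw | hw <;>
      simp [wMat, he, hw]
  · ext i j
    rw [Matrix.mul_apply]
    simp only [Matrix.transpose_apply, Matrix.smul_apply, Matrix.one_apply, smul_eq_mul,
      mul_ite, mul_one, mul_zero]
    obtain ⟨p, hp⟩ : ∃ p, blkIdx n i = p := ⟨_, rfl⟩
    obtain ⟨p', hp'⟩ : ∃ p', blkIdx n j = p' := ⟨_, rfl⟩
    obtain ⟨a, ha⟩ : ∃ a : ZMod n, (i.val : ZMod n) = a := ⟨_, rfl⟩
    obtain ⟨b, hb⟩ : ∃ b : ZMod n, (j.val : ZMod n) = b := ⟨_, rfl⟩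
    have hre : ∀ F : Fin (4 * n) → ℤ,
        ∑ k, F k = ∑ q : Fin 4, ∑ r : Fin n, F (finProdFinEquiv (q, r)) := by
      intro F
      calc ∑ k, F k = ∑ pr : Fin 4 × Fin n, F (finProdFinEquiv pr) :=
            (Fintype.sum_equiv finProdFinEquiv _ _ fun pr => rfl).symm
        _ = ∑ q : Fin 4, ∑ r : Fin n, F (finProdFinEquiv (q, r)) := Fintype.sum_prod_type _
    have hblk : ∀ (q : Fin 4) (r : Fin n), blkIdx n (finProdFinEquiv (q, r)) = q := by
      intro q r
      apply Fin.ext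
      show (finProdFinEquiv (q, r)).val / n % 4 = q.val
      rw [finProdFinEquiv_apply_val, Nat.add_mul_div_left _ _ hn,
        Nat.div_eq_of_lt r.isLt, zero_add, Nat.mod_eq_of_lt q.isLt]
    have hcast : ∀ (q : Fin 4) (r : Fin n),
        (((finProdFinEquiv (q, r) : Fin (4 * n)).val : ZMod n)) = ((r.val : ℕ) : ZMod n) := by
      intro q r
      rw [finProdFinEquiv_apply_val]
      push_cast
      simp [ZMod.natCast_self]
    have key : ∑ k, wMat n W i k * wMat n W j k
        = ∑ q : Fin 4, wE p q * wE p' q *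
            innerZ (fun z => W (wT p q) z.val) (fun z => W (wT p' q) z.val) (a - b) := by
      rw [hre fun k => wMat n W i k * wMat n W j k]
      refine Finset.sum_congr rfl fun q _ => ?_
      have step1 : ∀ r : Fin n,
          wMat n W i (finProdFinEquiv (q, r)) * wMat n W j (finProdFinEquiv (q, r))
          = (wE p q * W (wT p q) (((r.val : ZMod n) - a).val)) *
            (wE p' q * W (wT p' q) (((r.val : ZMod n) - b).val)) := by
        intro r
        simp only [wMat, hblk, hcast, hp, hp', ha, hb]
      rw [Finset.sum_congr rfl fun r _ => step1 r]
      have step2 : ∑ r : Fin n,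
          (wE p q * W (wT p q) (((r.val : ZMod n) - a).val)) *
            (wE p' q * W (wT p' q) (((r.val : ZMod n) - b).val))
          = ∑ z : ZMod n,
          (wE p q * W (wT p q) ((z - a).val)) * (wE p' q * W (wT p' q) ((z - b).val)) := by
        rw [sum_zmod_eq_range, ← Fin.sum_univ_eq_sum_range
          (fun k : ℕ => (wE p q * W (wT p q) (((k : ZMod n) - a).val)) *
            (wE p' q * W (wT p' q) (((k : ZMod n) - b).val)))]
      rw [step2, ← innerZ_shift (fun z => W (wT p q) z.val) (fun z => W (wT p' q) z.val) a b,
        Finset.mul_sum]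
      exact Finset.sum_congr rfl fun z _ => by ring
    rw [key]
    by_cases hij : i = j
    · subst hij
      rw [if_pos rfl]
      have hq1 : p = p' := hp.symm.trans hp'
      have hq2 : a = b := ha.symm.trans hb
      subst hq1
      subst hq2
      have hterm : ∀ q : Fin 4, wE p q * wE p q *
          innerZ (fun z => W (wT p q) z.val) (fun z => W (wT p q) z.val) (a - a) = (n : ℤ) := by
        intro q
        rw [sub_self, wE_sq, one_mul,
          innerZ_self_zero _ fun z => hPM (wT p q) z.val z.val_lt]
      rw [Finset.sum_congr rfl fun q _ => hterm q]
      simp only [Finset.sum_const, Finset.card_univ, Fintype.card_fin, nsmul_eq_mul]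
      push_cast
      ring
    · rw [if_neg hij]
      by_cases hpp : p = p'
      · -- same block row: use the Williamson PAF condition
        have hab : a ≠ b := by
          intro hab
          apply hij
          apply Fin.ext
          have hdiv : i.val / n = j.val / n := by
            have h4i : i.val / n < 4 := (Nat.div_lt_iff_lt_mul hn).2 i.isLt
            have h4j : j.val / n < 4 := (Nat.div_lt_iff_lt_mul hn).2 j.isLt
            have hbb : blkIdx n i = blkIdx n j := by rw [hp, hp', hpp]
            have := congrArg Fin.val hbb
            simpa [blkIdx, Nat.mod_eq_of_lt h4i, Nat.mod_eq_of_lt h4j] using this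
          have hmod : i.val % n = j.val % n := by
            have hab' : ((i.val : ℕ) : ZMod n) = ((j.val : ℕ) : ZMod n) := by rw [ha, hb, hab]
            have := congrArg ZMod.val hab'
            rwa [ZMod.val_natCast, ZMod.val_natCast] at this
          calc i.val = n * (i.val / n) + i.val % n := (Nat.div_add_mod i.val n).symm
            _ = n * (j.val / n) + j.val % n := by rw [hdiv, hmod]
            _ = j.val := Nat.div_add_mod j.val n
        have hs : a - b ≠ 0 := sub_ne_zero.2 hab
        have hterm : ∀ q : Fin 4, wE p q * wE p' q *
            innerZ (fun z => W (wT p q) z.val) (fun z => W (wT p' q) z.val) (a - b)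
            = PCF n (W (wT p q)) (W (wT p q)) (a - b).val := by
          intro q
          rw [← hpp, wE_sq, one_mul, innerZ_eq_PCF]
        rw [Finset.sum_congr rfl fun q _ => hterm q]
        have hperm : ∑ q : Fin 4, PCF n (W (wT p q)) (W (wT p q)) (a - b).val
            = PCF n A A (a - b).val + PCF n B B (a - b).val +
              PCF n C C (a - b).val + PCF n D D (a - b).val := by
          fin_cases p <;>
            simp [Fin.sum_univ_four, wT, hWdef, wSel] <;> ring
        rw [hperm]
        have h1 : 1 ≤ (a - b).val :=
          Nat.one_le_iff_ne_zero.2 fun h0 => hs ((ZMod.val_eq_zero _).1 h0)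
        exact hW (a - b).val h1 (ZMod.val_lt _)
      · exact quaternion_orth
          (fun c d => innerZ (fun z => W c z.val) (fun z => W d z.val) (a - b))
          (fun c d => innerZ_comm _ _ (fun z => hsymZ c z) (fun z => hsymZ d z) (a - b))
          p p' hpp
end
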